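/- Bregman divergence of the expected posterior-KL functional equals the expected posterior-to-posterior KL: Let Ψ, O, Φ be finite nonempty sets, let q : Ψ → Δ(O) be a kernel with q(o|ψ) > 0 for all ψ ∈ Ψ and o ∈ O, and let c : Ψ → Φ. For ν in the positive orthant of ℝ^Ψ with Σ_ψ ν(ψ) > 0 and o ∈ O, define n_φ(o) = Σ_{ψ : c(ψ)=φ} ν(ψ) q(o|ψ), m(o) = Σ_φ n_φ(o), and the posterior ν_Φ(φ | o) = n_φ(o)/m(o). Fix ρ ∈ Δ(Φ) with full support and define F(ν) = Σ_ψ ν(ψ) Σ_o q(o|ψ) · KL(ν_Φ(·|o), ρ) = Σ_o Σ_φ n_φ(o) log( n_φ(o) / (m(o) ρ(φ)) ), extended by the formula on the right to all nonzero vectors ν with nonnegative entries, with the convention 0·log 0 = 0. Then: (i) F is convex on Δ(Ψ); and (ii) for every ν ∈ Δ(Ψ) and every ν′ ∈ Δ(Ψ) with full support, Breg_F(ν, ν′) = Σ_ψ ν(ψ) Σ_o q(o|ψ) · KL( ν_Φ(·|o), ν′_Φ(·|o) ), where the Bregman divergence is computed with respect to the stated extension of F. -/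

import Mathlib

open Finset

/-- `n_φ(o) = Σ_{ψ : c(ψ)=φ} ν(ψ) q(o|ψ)`. -/
noncomputable def postNum {Psi O Phi : Type*} [Fintype Psi] [DecidableEq Phi]
    (q : Psi → O → ℝ) (c : Psi → Phi) (ν : Psi → ℝ) (o : O) (φ : Phi) : ℝ :=
  ∑ ψ ∈ univ.filter (fun ψ => c ψ = φ), ν ψ * q ψ o

/-- `m(o) = Σ_ψ ν(ψ) q(o|ψ)`. -/
noncomputable def postMass {Psi O : Type*} [Fintype Psi]
    (q : Psi → O → ℝ) (ν : Psi → ℝ) (o : O) : ℝ :=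
  ∑ ψ, ν ψ * q ψ o

/-- The expected posterior-KL functional
`F(ν) = Σ_o Σ_φ n_φ(o) log( n_φ(o) / (m(o) ρ(φ)) )`, which on `Δ(Ψ)` equals
`Σ_ψ ν(ψ) Σ_o q(o|ψ) KL(ν_Φ(·|o), ρ)` (the convention `0·log 0 = 0` is automatic). -/
noncomputable def postKLFunctional {Psi O Phi : Type*}
    [Fintype Psi] [Fintype O] [Fintype Phi] [DecidableEq Phi]
    (q : Psi → O → ℝ) (c : Psi → Phi) (ρ : Phi → ℝ) (ν : Psi → ℝ) : ℝ :=
  ∑ o, ∑ φ, postNum q c ν o φ * Real.log (postNum q c ν o φ / (postMass q ν o * ρ φ))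

/-! `F` is a sum over `(o, φ)` of `g(n_φ(o), m(o) ρ(φ))`, where `g(x, y) = x log (x / y)` is the
perspective of the convex function `t ↦ t log t` and `n_φ(o)`, `m(o)` are linear in `ν`. Joint
convexity of `g` gives (i). The Bregman divergence of `g` is
`x log ((x / y) / (x' / y')) + x' y / y' - x`; with `y = m(o) ρ(φ)` the factor `ρ(φ)` cancels,
and the affine remainders add up over `φ` to `m'(o) · m(o) / m'(o) - m(o) = 0` since `∑_φ n_φ = m`.
Finally `∑_ψ ν(ψ) q(o|ψ) = m(o)` turns `∑_o ∑_φ n_φ(o) log (…)` into the expected posterior KL. -/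

open Real

theorem convexOn_mul_log_div :
    ConvexOn ℝ (Set.Ici 0 ×ˢ Set.Ioi 0) (fun p : ℝ × ℝ => p.1 * log (p.1 / p.2)) := by
  refine ⟨(convex_Ici 0).prod (convex_Ioi 0), ?_⟩
  rintro ⟨x₁, y₁⟩ ⟨hx₁, hy₁⟩ ⟨x₂, y₂⟩ ⟨hx₂, hy₂⟩ a b ha hb hab
  simp only [Set.mem_Ici, Set.mem_Ioi] at hx₁ hy₁ hx₂ hy₂
  simp only [Prod.smul_mk, Prod.mk_add_mk, smul_eq_mul]
  have hY : 0 < a * y₁ + b * y₂ := by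
    rcases ha.eq_or_lt with rfl | ha
    · simp only [zero_add] at hab; simp [hab, hy₂]
    · positivity
  -- `(a x₁ + b x₂) / (a y₁ + b y₂)` is the convex combination of `x₁ / y₁` and `x₂ / y₂`
  -- with weights proportional to `a y₁` and `b y₂`
  have key := Real.convexOn_mul_log.2 (div_nonneg hx₁ hy₁.le : x₁ / y₁ ∈ Set.Ici 0)
    (div_nonneg hx₂ hy₂.le : x₂ / y₂ ∈ Set.Ici 0)
    (by positivity : 0 ≤ a * y₁ / (a * y₁ + b * y₂))
    (by positivity : 0 ≤ b * y₂ / (a * y₁ + b * y₂)) (by rw [← add_div, div_self hY.ne'])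
  have hpt : a * y₁ / (a * y₁ + b * y₂) * (x₁ / y₁) + b * y₂ / (a * y₁ + b * y₂) * (x₂ / y₂)
      = (a * x₁ + b * x₂) / (a * y₁ + b * y₂) := by
    field_simp
  simp only [smul_eq_mul, hpt] at key
  calc (a * x₁ + b * x₂) * log ((a * x₁ + b * x₂) / (a * y₁ + b * y₂))
      = (a * y₁ + b * y₂) * ((a * x₁ + b * x₂) / (a * y₁ + b * y₂) *
          log ((a * x₁ + b * x₂) / (a * y₁ + b * y₂))) := by field_simp
    _ ≤ (a * y₁ + b * y₂) * (a * y₁ / (a * y₁ + b * y₂) * (x₁ / y₁ * log (x₁ / y₁)) +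
          b * y₂ / (a * y₁ + b * y₂) * (x₂ / y₂ * log (x₂ / y₂))) :=
        mul_le_mul_of_nonneg_left key hY.le
    _ = a * (x₁ * log (x₁ / y₁)) + b * (x₂ * log (x₂ / y₂)) := by field_simp

theorem ConvexOn.fun_sum {𝕜 E β ι : Type*} [Semiring 𝕜] [PartialOrder 𝕜] [AddCommMonoid E]
    [AddCommMonoid β] [PartialOrder β] [IsOrderedAddMonoid β] [SMul 𝕜 E] [Module 𝕜 β]
    {s : Set E} (hs : Convex 𝕜 s) (t : Finset ι) {f : ι → E → β}
    (hf : ∀ i ∈ t, ConvexOn 𝕜 s (f i)) :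
    ConvexOn 𝕜 s (fun x => ∑ i ∈ t, f i x) := by
  induction t using Finset.cons_induction with
  | empty => simpa using convexOn_const (0 : β) hs
  | cons i t hi ih =>
    simp only [Finset.sum_cons]
    exact (hf i (mem_cons_self i t)).add (ih fun j hj => hf j (mem_cons_of_mem hj))

theorem HasFDerivAt.mul_log_div {E : Type*} [NormedAddCommGroup E] [NormedSpace ℝ E]
    {f g : E → ℝ} {f' g' : StrongDual ℝ E} {x : E} (hf : HasFDerivAt f f' x)
    (hg : HasFDerivAt g g' x) (hfx : 0 < f x) (hgx : 0 < g x) :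
    HasFDerivAt (fun v => f v * Real.log (f v / g v))
      ((Real.log (f x / g x) + 1) • f' - (f x / g x) • g') x := by
  have hsplit : (fun v => f v * (Real.log (f v) - Real.log (g v))) =ᶠ[nhds x]
      (fun v => f v * Real.log (f v / g v)) := by
    filter_upwards [hf.continuousAt.eventually (lt_mem_nhds hfx),
      hg.continuousAt.eventually (lt_mem_nhds hgx)] with v hfv hgv
    rw [Real.log_div hfv.ne' hgv.ne']
  refine ((hf.mul ((hf.log hfx.ne').sub (hg.log hgx.ne'))).congr_of_eventuallyEq
    hsplit.symm).congr_fderiv ?_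
  ext v
  simp only [add_apply, sub_apply, smul_apply, Pi.sub_apply, smul_eq_mul,
    Real.log_div hfx.ne' hgx.ne']
  field_simp
  ring

theorem mul_log_div_bregman_eq {x y x' y' : ℝ} (hx : 0 ≤ x) (hy : 0 < y) (hy' : 0 < y')
    (hxx' : 0 < x → 0 < x') :
    x * log (x / y) - x' * log (x' / y') - ((log (x' / y') + 1) * (x - x') - x' / y' * (y - y'))
      = x * log ((x / y) / (x' / y')) + (x' * y / y' - x) := by
  rcases hx.eq_or_lt with rfl | hx
  · field_simp; ring
  · have hx' := hxx' hx
    rw [log_div (div_pos hx hy).ne' (div_pos hx' hy').ne', log_div hx.ne' hy.ne',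
      log_div hx'.ne' hy'.ne']
    field_simp
    ring

section Posterior

variable {Psi O Phi : Type*} [Fintype Psi] [DecidableEq Phi] (q : Psi → O → ℝ) (c : Psi → Phi)

noncomputable def postNumCLM (o : O) (φ : Phi) : (Psi → ℝ) →L[ℝ] ℝ :=
  LinearMap.toContinuousLinearMap
    { toFun := fun ν => postNum q c ν o φ
      map_add' := fun ν ν' => by simp [postNum, add_mul, sum_add_distrib]
      map_smul' := fun r ν => by simp [postNum, mul_sum, mul_assoc] }

@[simp] lemma postNumCLM_apply (o : O) (φ : Phi) (ν : Psi → ℝ) :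
    postNumCLM q c o φ ν = postNum q c ν o φ := rfl

noncomputable def postMassCLM (o : O) : (Psi → ℝ) →L[ℝ] ℝ :=
  LinearMap.toContinuousLinearMap
    { toFun := fun ν => postMass q ν o
      map_add' := fun ν ν' => by simp [postMass, add_mul, sum_add_distrib]
      map_smul' := fun r ν => by simp [postMass, mul_sum, mul_assoc] }

@[simp] lemma postMassCLM_apply (o : O) (ν : Psi → ℝ) :
    postMassCLM q o ν = postMass q ν o := rfl

lemma sum_postNum [Fintype Phi] (ν : Psi → ℝ) (o : O) :
    ∑ φ, postNum q c ν o φ = postMass q ν o :=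
  sum_fiberwise univ c fun ψ => ν ψ * q ψ o

variable {q}

lemma postNum_nonneg (hq : ∀ ψ o, 0 ≤ q ψ o) {ν : Psi → ℝ} (hν : ∀ ψ, 0 ≤ ν ψ) (o : O)
    (φ : Phi) : 0 ≤ postNum q c ν o φ :=
  sum_nonneg fun ψ _ => mul_nonneg (hν ψ) (hq ψ o)

lemma postNum_le_postMass (hq : ∀ ψ o, 0 ≤ q ψ o) {ν : Psi → ℝ} (hν : ∀ ψ, 0 ≤ ν ψ) (o : O)
    (φ : Phi) : postNum q c ν o φ ≤ postMass q ν o :=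
  sum_le_sum_of_subset_of_nonneg (filter_subset _ _) fun ψ _ _ => mul_nonneg (hν ψ) (hq ψ o)

lemma postMass_pos (hq : ∀ ψ o, 0 < q ψ o) {ν : Psi → ℝ} (hν : ν ∈ stdSimplex ℝ Psi) (o : O) :
    0 < postMass q ν o := by
  obtain ⟨ψ, -, hψ⟩ := exists_lt_of_sum_lt (s := univ) (f := 0) (g := ν) (by simp [hν.2])
  exact sum_pos' (fun ψ _ => mul_nonneg (hν.1 ψ) (hq ψ o).le)
    ⟨ψ, mem_univ ψ, mul_pos hψ (hq ψ o)⟩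

lemma postNum_pos_or_eq_zero (hq : ∀ ψ o, 0 < q ψ o) {ν' : Psi → ℝ} (hν' : ∀ ψ, 0 < ν' ψ)
    (o : O) (φ : Phi) : 0 < postNum q c ν' o φ ∨ ∀ ν, postNum q c ν o φ = 0 := by
  rcases (univ.filter fun ψ => c ψ = φ).eq_empty_or_nonempty with hempty | hne
  · exact .inr fun ν => by rw [postNum, hempty, sum_empty]
  · exact .inl (sum_pos (fun ψ _ => mul_pos (hν' ψ) (hq ψ o)) hne)

lemma sum_mul_sum_eq_sum_postMass_mul [Fintype O] (ν : Psi → ℝ) (f : O → ℝ) :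
    ∑ ψ, ν ψ * ∑ o, q ψ o * f o = ∑ o, postMass q ν o * f o := by
  simp only [postMass, mul_sum, sum_mul, mul_assoc]
  exact sum_comm

variable [Fintype O] [Fintype Phi] {ρ : Phi → ℝ}

theorem convexOn_postKLFunctional (hq : ∀ ψ o, 0 < q ψ o) (hρ : ∀ φ, 0 < ρ φ) :
    ConvexOn ℝ (stdSimplex ℝ Psi) (postKLFunctional q c ρ) := by
  refine ConvexOn.fun_sum (convex_stdSimplex ℝ Psi) _ fun o _ =>
    ConvexOn.fun_sum (convex_stdSimplex ℝ Psi) _ fun φ _ => ?_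
  let L := (postNumCLM q c o φ : (Psi → ℝ) →ₗ[ℝ] ℝ).prod
    ((postMassCLM q o : (Psi → ℝ) →ₗ[ℝ] ℝ).smulRight (ρ φ))
  refine (convexOn_mul_log_div.comp_linearMap L).subset (fun ν hν => ⟨?_, ?_⟩)
    (convex_stdSimplex ℝ Psi)
  · exact postNum_nonneg c (fun ψ o => (hq ψ o).le) hν.1 o φ
  · exact mul_pos (postMass_pos hq hν o) (hρ φ)

theorem hasFDerivAt_postKLFunctional (hq : ∀ ψ o, 0 < q ψ o) (hρ : ∀ φ, 0 < ρ φ)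
    {ν' : Psi → ℝ} (hν' : ∀ ψ, 0 < ν' ψ) :
    HasFDerivAt (postKLFunctional q c ρ)
      (∑ o, ∑ φ, ((log (postNum q c ν' o φ / (postMass q ν' o * ρ φ)) + 1) • postNumCLM q c o φ
        - (postNum q c ν' o φ / (postMass q ν' o * ρ φ)) • ρ φ • postMassCLM q o)) ν' := by
  refine HasFDerivAt.fun_sum fun o _ => HasFDerivAt.fun_sum fun φ _ => ?_
  rcases postNum_pos_or_eq_zero c hq hν' o φ with hn | hzero
  · have hm := hn.trans_le
      (postNum_le_postMass c (fun ψ o => (hq ψ o).le) (fun ψ => (hν' ψ).le) o φ)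
    exact (postNumCLM q c o φ).hasFDerivAt.mul_log_div
      ((postMassCLM q o).hasFDerivAt.mul_const (ρ φ)) hn (mul_pos hm (hρ φ))
  · have hL : postNumCLM q c o φ = 0 := ContinuousLinearMap.ext hzero
    simp only [hzero, hL, zero_mul, zero_div, smul_zero, zero_smul, sub_zero]
    exact hasFDerivAt_const 0 ν'

theorem postKLFunctional_bregman_eq (hq : ∀ ψ o, 0 < q ψ o) (hρ : ∀ φ, 0 < ρ φ)
    {ν ν' : Psi → ℝ} (hν : ν ∈ stdSimplex ℝ Psi) (hν' : ν' ∈ stdSimplex ℝ Psi)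
    (hν'pos : ∀ ψ, 0 < ν' ψ) :
    postKLFunctional q c ρ ν - postKLFunctional q c ρ ν'
        - fderiv ℝ (postKLFunctional q c ρ) ν' (ν - ν')
      = ∑ o, ∑ φ, postNum q c ν o φ *
          log ((postNum q c ν o φ / postMass q ν o) / (postNum q c ν' o φ / postMass q ν' o)) := by
  rw [(hasFDerivAt_postKLFunctional c hq hρ hν'pos).fderiv]
  simp only [postKLFunctional, FunLike.coe_sum, Finset.sum_apply, sub_apply,
    smul_apply, smul_eq_mul, postNumCLM_apply, postMassCLM_apply, map_sub, ← sum_sub_distrib]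
  refine sum_congr rfl fun o _ => ?_
  have hm := postMass_pos hq hν o
  have hm' := postMass_pos hq hν' o
  have hsupp : ∀ φ, 0 < postNum q c ν o φ → 0 < postNum q c ν' o φ := fun φ hn =>
    (postNum_pos_or_eq_zero c hq hν'pos o φ).resolve_right fun h => (h ν ▸ hn).false
  calc _ = ∑ φ, (postNum q c ν o φ * log ((postNum q c ν o φ / (postMass q ν o * ρ φ))
            / (postNum q c ν' o φ / (postMass q ν' o * ρ φ)))
          + (postNum q c ν' o φ * (postMass q ν o * ρ φ) / (postMass q ν' o * ρ φ)
            - postNum q c ν o φ)) := sum_congr rfl fun φ _ => by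
        linear_combination mul_log_div_bregman_eq
          (postNum_nonneg c (fun ψ o => (hq ψ o).le) hν.1 o φ) (mul_pos hm (hρ φ))
          (mul_pos hm' (hρ φ)) (hsupp φ)
    _ = ∑ φ, (postNum q c ν o φ * log ((postNum q c ν o φ / postMass q ν o)
            / (postNum q c ν' o φ / postMass q ν' o))
          + (postNum q c ν' o φ * (postMass q ν o / postMass q ν' o) - postNum q c ν o φ)) :=
        sum_congr rfl fun φ _ => by
          rw [mul_div_assoc, mul_div_mul_right _ _ (hρ φ).ne', div_mul_eq_div_div,
            div_mul_eq_div_div, div_div_div_cancel_right₀ (hρ φ).ne']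
    _ = _ := by
      rw [sum_add_distrib, sum_sub_distrib, ← sum_mul, sum_postNum, sum_postNum,
        mul_div_cancel₀ _ hm'.ne', sub_self, add_zero]

end Posterior

theorem bregman_of_postKLFunctional_general
    {Psi O Phi : Type*} [Fintype Psi] [Fintype O]
    [Fintype Phi] [DecidableEq Phi]
    (q : Psi → O → ℝ) (hqpos : ∀ ψ o, 0 < q ψ o)
    (c : Psi → Phi)
    (ρ : Phi → ℝ) (hρpos : ∀ φ, 0 < ρ φ) :
    ConvexOn ℝ (stdSimplex ℝ Psi) (postKLFunctional q c ρ) ∧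
    (∀ ν ∈ stdSimplex ℝ Psi, ∀ ν' ∈ stdSimplex ℝ Psi, (∀ ψ, 0 < ν' ψ) →
      postKLFunctional q c ρ ν - postKLFunctional q c ρ ν'
          - fderiv ℝ (postKLFunctional q c ρ) ν' (ν - ν')
        = ∑ ψ, ν ψ * ∑ o, q ψ o * ∑ φ,
            (postNum q c ν o φ / postMass q ν o) *
              Real.log ((postNum q c ν o φ / postMass q ν o)
                / (postNum q c ν' o φ / postMass q ν' o))) := by
  refine ⟨convexOn_postKLFunctional c hqpos hρpos, fun ν hν ν' hν' hν'pos => ?_⟩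
  rw [postKLFunctional_bregman_eq c hqpos hρpos hν hν' hν'pos, sum_mul_sum_eq_sum_postMass_mul]
  refine sum_congr rfl fun o _ => ?_
  rw [mul_sum]
  refine sum_congr rfl fun φ _ => ?_
  rw [← mul_assoc, mul_div_cancel₀ _ (postMass_pos hqpos hν o).ne']

/-- Bregman divergence of the expected posterior-KL functional equals the expected
posterior-to-posterior KL: `F` is convex on `Δ(Ψ)`, and for `ν ∈ Δ(Ψ)` and full-support
`ν′ ∈ Δ(Ψ)`, `Breg_F(ν, ν′) = Σ_ψ ν(ψ) Σ_o q(o|ψ) KL(ν_Φ(·|o), ν′_Φ(·|o))`. -/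
theorem bregman_of_postKLFunctional
    {Psi O Phi : Type*} [Fintype Psi] [Nonempty Psi] [Fintype O] [Nonempty O]
    [Fintype Phi] [Nonempty Phi] [DecidableEq Phi]
    (q : Psi → O → ℝ) (hqpos : ∀ ψ o, 0 < q ψ o) (hq1 : ∀ ψ, ∑ o, q ψ o = 1)
    (c : Psi → Phi)
    (ρ : Phi → ℝ) (hρ : ρ ∈ stdSimplex ℝ Phi) (hρpos : ∀ φ, 0 < ρ φ) :
    ConvexOn ℝ (stdSimplex ℝ Psi) (postKLFunctional q c ρ) ∧
    (∀ ν ∈ stdSimplex ℝ Psi, ∀ ν' ∈ stdSimplex ℝ Psi, (∀ ψ, 0 < ν' ψ) →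
      postKLFunctional q c ρ ν - postKLFunctional q c ρ ν'
          - fderiv ℝ (postKLFunctional q c ρ) ν' (ν - ν')
        = ∑ ψ, ν ψ * ∑ o, q ψ o * ∑ φ,
            (postNum q c ν o φ / postMass q ν o) *
              Real.log ((postNum q c ν o φ / postMass q ν o)
                / (postNum q c ν' o φ / postMass q ν' o))) :=
  bregman_of_postKLFunctional_general q hqpos c ρ hρpos
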